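/- Let α be a real number with 0 < α ≤ 1. Suppose there exist reals h > 0 and t₀ ≥ 0 with t₀ + h > 0 such that α·h^{1−α} = (t₀ + k·h)^{1−α} for every positive natural number k. Then α = 1. -/
import Mathlib

/-- If `0 < α ≤ 1` and there exist reals `h > 0` and `t₀ ≥ 0` with
`t₀ + h > 0` such that `α·h^(1-α) = (t₀ + k·h)^(1-α)` for every positive natural
number `k`, then `α = 1`. -/
theorem alpha_eq_one_of_grid_compat (α : ℝ) (hα : 0 < α) (hα1 : α ≤ 1)
    (hex : ∃ h t₀ : ℝ, 0 < h ∧ 0 ≤ t₀ ∧ 0 < t₀ + h ∧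
      ∀ k : ℕ, 0 < k → α * h ^ (1 - α) = (t₀ + (k : ℝ) * h) ^ (1 - α)) :
    α = 1 := by
  by_contra hne
  have hlt : α < 1 := lt_of_le_of_ne hα1 hne
  obtain ⟨h, t₀, hh, ht₀, hth, key⟩ := hex
  have h1 := key 1 one_pos
  have h2 := key 2 two_pos
  push_cast at h1 h2
  rw [one_mul] at h1
  have heq : (t₀ + h) ^ (1 - α) = (t₀ + 2 * h) ^ (1 - α) := by rw [← h1, h2]
  have hstrict : (t₀ + h) ^ (1 - α) < (t₀ + 2 * h) ^ (1 - α) :=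
    Real.rpow_lt_rpow (le_of_lt hth) (by linarith) (by linarith)
  linarith
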